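/- arXiv:2306.10733 — 5 statements merged into one kernel-verified Lean document; each statement's English description precedes it below -/
import Mathlib

section
/- Let n and k be natural numbers with k ≥ 2 and 6 ≤ 2n ≤ 3^k − 3, and let (x, y, m) = StandardPartition(n). Then x + y ≤ 3^(k−1) and 2m ≤ 3^(k−1). -/
/-- Standard Partition of `n` coins: `(left, right, outside)`. -/
def standardPartition (n : ℕ) : ℕ × ℕ × ℕ :=
  if n = 0 then (0, 0, 0)
  else if n = 1 then (0, 0, 1)
  else if n = 2 then (1, 1, 0)
  else if n % 3 = 0 then (n / 3, n / 3, n / 3)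
  else if n % 3 = 1 then (n / 3 + 1, n / 3 + 1, n / 3 - 1)
  else (n / 3 + 1, n / 3 + 1, n / 3)

theorem standardPartition_size_bound (n k x y m : ℕ) (hk : 2 ≤ k)
    (h6 : 6 ≤ 2 * n) (hn : 2 * n ≤ 3 ^ k - 3)
    (hpart : standardPartition n = (x, y, m)) :
    x + y ≤ 3 ^ (k - 1) ∧ 2 * m ≤ 3 ^ (k - 1) := by
  have h3 : 3 ^ k = 3 * 3 ^ (k - 1) := by
    conv_lhs => rw [show k = (k - 1) + 1 by omega, pow_succ]
    ring
  have hP : 3 ≤ 3 ^ (k - 1) := by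
    calc 3 = 3 ^ 1 := rfl
    _ ≤ 3 ^ (k - 1) := Nat.pow_le_pow_right (by norm_num) (by omega)
  simp only [standardPartition, Prod.mk.injEq] at hpart
  split_ifs at hpart <;> obtain ⟨hx, hy, hm⟩ := hpart <;> omega
end

section
/- Let m and k be natural numbers with k ≥ 2 and 2m ≤ 3^k, and let (x, y, t) = SpecialPartition(m). Then x + y ≤ 3^(k−1) and 2t ≤ 3^(k−1). -/
/-- Special Partition of `m` coins: `(left, right, outside)`. -/
def specialPartition (m : ℕ) : ℕ × ℕ × ℕ :=
  if m = 0 then (0, 0, 0)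
  else if m = 1 then (1, 0, 0)
  else if m = 2 then (1, 0, 1)
  else if m % 3 = 0 then (m / 3, m / 3, m / 3)
  else if m % 3 = 1 then (m / 3 + 1, m / 3, m / 3)
  else (m / 3 + 1, m / 3 + 1, m / 3)

theorem specialPartition_size_bound (m k x y t : ℕ) (hk : 2 ≤ k)
    (hm : 2 * m ≤ 3 ^ k)
    (hpart : specialPartition m = (x, y, t)) :
    x + y ≤ 3 ^ (k - 1) ∧ 2 * t ≤ 3 ^ (k - 1) := by
  have hp : 3 ^ k = 3 * 3 ^ (k - 1) := by
    rw [← pow_succ']; congr 1; omega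
  have hp3 : 3 ≤ 3 ^ (k - 1) := by
    calc 3 = 3 ^ 1 := rfl
    _ ≤ 3 ^ (k - 1) := Nat.pow_le_pow_right (by norm_num) (by omega)
  simp only [specialPartition] at hpart
  split_ifs at hpart <;>
    (injection hpart with h1 h2; injection h2 with h2 h3; subst h1 h2 h3) <;>
    omega
end

section
/- Let k be a natural number with k ≥ 2 and set c = 3^(k−1). Let x and y be natural numbers with x ≠ 1, y ≠ 1, 3 < x + y and x + y ≤ 3^k. Let ((x1, z1), (x2, z2), (x3, z3)) = PairPartition(c, (x, y)). Then x1 + z2 ≤ 3^(k−1), x2 + z1 ≤ 3^(k−1), and x3 + z3 ≤ 3^(k−1). -/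
/-- Pair Partition with bound `c` of `(x, y)` (heavy and light coin candidates):
returns `((x1, z1), (x2, z2), (x3, z3))` for the left side, right side and outside. -/
def pairPartition (c : ℕ) (p : ℕ × ℕ) : (ℕ × ℕ) × (ℕ × ℕ) × (ℕ × ℕ) :=
  if p.1 + p.2 ≤ 3 then ((p.1, p.2), (0, 0), (0, 0))
  else
    let x1 := (standardPartition p.1).1
    let x2 := (standardPartition p.1).2.1
    let x3 := (standardPartition p.1).2.2
    let y1 := (standardPartition p.2).1
    let y2 := (standardPartition p.2).2.1
    let y3 := (standardPartition p.2).2.2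
    let z1 := if x1 + y1 > c then c - x1 else y1
    let w3 := if x1 + y1 > c then y3 + y1 + x1 - c else y3
    let z2 := if x2 + y2 > c then c - x2 else y2
    let z3 := if x2 + y2 > c then w3 + y2 + x2 - c else w3
    ((x1, z1), (x2, z2), (x3, z3))

lemma sp_spec (n : ℕ) (hn : n ≠ 1) :
    (standardPartition n).1 = (standardPartition n).2.1 ∧
    (standardPartition n).1 + (standardPartition n).2.1 + (standardPartition n).2.2 = n ∧
    (standardPartition n).2.2 ≤ (standardPartition n).1 ∧
    3 * (standardPartition n).1 ≤ n + 2 := by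
  unfold standardPartition
  split_ifs <;> simp_all <;> omega

theorem pairPartition_size_bound_general (k : ℕ) (hk : 2 ≤ k)
    (c : ℕ) (hc : c = 3 ^ (k - 1))
    (x y : ℕ) (hx : x ≠ 1) (hy : y ≠ 1) (h3 : 3 < x + y) (hxy : x + y ≤ 3 ^ k)
    (x1 z1 x2 z2 x3 z3 : ℕ)
    (hpart : pairPartition c (x, y) = ((x1, z1), (x2, z2), (x3, z3))) :
    x1 + z2 ≤ 3 ^ (k - 1) ∧ x2 + z1 ≤ 3 ^ (k - 1) ∧ x3 + z3 ≤ 3 ^ (k - 1) := by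
  obtain ⟨hxe, hxs, hxle, hxb⟩ := sp_spec x hx
  obtain ⟨hye, hys, hyle, hyb⟩ := sp_spec y hy
  have h3c : x + y ≤ 3 * c := by
    rw [hc, ← pow_succ']
    rw [show k - 1 + 1 = k by omega]
    exact hxy
  have hc3 : 3 ≤ c := by
    rw [hc]
    calc 3 = 3 ^ 1 := rfl
    _ ≤ 3 ^ (k - 1) := Nat.pow_le_pow_right (by norm_num) (by omega)
  rw [← hc]
  have hne : ¬ ((x, y).1 + (x, y).2 ≤ 3) := by simp; omega
  simp only [pairPartition, if_neg hne, Prod.mk.injEq] at hpart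
  split_ifs at hpart <;> omega
end

section
/- Let k be a natural number with k ≥ 2 and set c = 3^(k−1). For each x in {3^k − 3, 3^k − 2, 3^k − 1}, let ((x1, z1), (x2, z2), (x3, z3)) = PairPartition(c, (x, 1)). Then x1 + z2 ≤ 3^(k−1), x2 + z1 ≤ 3^(k−1), and x3 + z3 ≤ 3^(k−1). -/
lemma sp3m3 (m : ℕ) (hm : 3 ≤ m) : standardPartition (3*m-3) = (m-1, m-1, m-1) := by
  have h0 : 3*m-3 ≠ 0 := by omega
  have h1 : 3*m-3 ≠ 1 := by omega
  have h2 : 3*m-3 ≠ 2 := by omega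
  have h3 : (3*m-3) % 3 = 0 := by omega
  have h4 : (3*m-3) / 3 = m-1 := by omega
  simp [standardPartition, h0, h1, h2, h3, h4]

lemma sp3m2 (m : ℕ) (hm : 3 ≤ m) : standardPartition (3*m-2) = (m, m, m-2) := by
  have h0 : 3*m-2 ≠ 0 := by omega
  have h1 : 3*m-2 ≠ 1 := by omega
  have h2 : 3*m-2 ≠ 2 := by omega
  have h3 : (3*m-2) % 3 = 1 := by omega
  have h4 : (3*m-2) / 3 = m-1 := by omega
  simp only [standardPartition, h0, h1, h2, h3, h4, if_false, if_true, ite_true, ite_false]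
  simp [Prod.ext_iff]
  omega

lemma sp3m1 (m : ℕ) (hm : 3 ≤ m) : standardPartition (3*m-1) = (m, m, m-1) := by
  have h0 : 3*m-1 ≠ 0 := by omega
  have h1 : 3*m-1 ≠ 1 := by omega
  have h2 : 3*m-1 ≠ 2 := by omega
  have h3 : (3*m-1) % 3 = 2 := by omega
  have h4 : (3*m-1) / 3 = m-1 := by omega
  simp only [standardPartition, h0, h1, h2, h3, h4]
  norm_num [Prod.ext_iff]
  omega

lemma sp1 : standardPartition 1 = (0, 0, 1) := by decide

theorem pairPartition_size_bound_exceptional (k : ℕ) (hk : 2 ≤ k)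
    (c : ℕ) (hc : c = 3 ^ (k - 1)) :
    ∀ x ∈ ({3 ^ k - 3, 3 ^ k - 2, 3 ^ k - 1} : Set ℕ),
      ∀ x1 z1 x2 z2 x3 z3 : ℕ,
        pairPartition c (x, 1) = ((x1, z1), (x2, z2), (x3, z3)) →
        x1 + z2 ≤ 3 ^ (k - 1) ∧ x2 + z1 ≤ 3 ^ (k - 1) ∧ x3 + z3 ≤ 3 ^ (k - 1) := by
  subst hc
  have hm : 3 ≤ 3 ^ (k-1) := by
    calc 3 = 3 ^ 1 := by norm_num
    _ ≤ 3 ^ (k-1) := Nat.pow_le_pow_right (by norm_num) (by omega)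
  have hn : 3 ^ k = 3 * 3 ^ (k-1) := by
    rw [← pow_succ']
    congr 1
    omega
  intro x hx x1 z1 x2 z2 x3 z3 heq
  simp only [Set.mem_insert_iff, Set.mem_singleton_iff, hn] at hx
  revert heq hx hm
  generalize 3 ^ (k-1) = m
  intro hm heq hx
  rcases hx with h | h | h <;> subst h <;>
    [ (rw [pairPartition] at heq
       rw [if_neg (by first | omega | simp | (simp; omega))] at heq
       simp only [sp3m3 m hm, sp1] at heq
       rw [if_neg (by first | omega | simp | (simp; omega)),
           if_neg (by first | omega | simp | (simp; omega))] at heq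
       simp only [Prod.mk.injEq] at heq);
      (rw [pairPartition] at heq
       rw [if_neg (by first | omega | simp | (simp; omega))] at heq
       simp only [sp3m2 m hm, sp1] at heq
       rw [if_neg (by first | omega | simp | (simp; omega)),
           if_neg (by first | omega | simp | (simp; omega))] at heq
       simp only [Prod.mk.injEq] at heq);
      (rw [pairPartition] at heq
       rw [if_neg (by first | omega | simp | (simp; omega))] at heq
       simp only [sp3m1 m hm, sp1] at heq
       rw [if_neg (by first | omega | simp | (simp; omega)),
           if_neg (by first | omega | simp | (simp; omega))] at heq
       simp only [Prod.mk.injEq] at heq)] <;>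
  (obtain ⟨⟨e1,e2⟩,⟨e3,e4⟩,e5,e6⟩ := heq; rw [if_neg (by omega)] at e6; omega)
end

section
/- Let c, x, y be natural numbers with x + y > 3. Let (x1, x2, x3) = StandardPartition(x) and (y1, y2, y3) = StandardPartition(y), and suppose x1 ≤ c and x2 ≤ c. Let ((x1, z1), (x2, z2), (x3, z3)) = PairPartition(c, (x, y)). Then x1 = x2, x1 + x2 + x3 = x, z1 + z2 + z3 = y, x1 + z1 ≤ c, and x2 + z2 ≤ c. -/
lemma sp_eq (n : ℕ) : (standardPartition n).1 = (standardPartition n).2.1 := by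
  unfold standardPartition; split_ifs <;> rfl

lemma sp_sum (n : ℕ) :
    (standardPartition n).1 + (standardPartition n).2.1 + (standardPartition n).2.2 = n := by
  unfold standardPartition
  split_ifs with h0 h1 h2 hm0 hm1 <;> simp_all <;> omega

theorem pairPartition_basic_properties (c x y : ℕ) (h3 : 3 < x + y)
    (x1 x2 x3 y1 y2 y3 : ℕ)
    (hsx : standardPartition x = (x1, x2, x3))
    (hsy : standardPartition y = (y1, y2, y3))
    (hx1 : x1 ≤ c) (hx2 : x2 ≤ c)
    (z1 z2 z3 : ℕ)
    (hpart : pairPartition c (x, y) = ((x1, z1), (x2, z2), (x3, z3))) :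
    x1 = x2 ∧ x1 + x2 + x3 = x ∧ z1 + z2 + z3 = y ∧ x1 + z1 ≤ c ∧ x2 + z2 ≤ c := by
  have ex1 : (standardPartition x).1 = x1 := by rw [hsx]
  have ex2 : (standardPartition x).2.1 = x2 := by rw [hsx]
  have ex3 : (standardPartition x).2.2 = x3 := by rw [hsx]
  have ey1 : (standardPartition y).1 = y1 := by rw [hsy]
  have ey2 : (standardPartition y).2.1 = y2 := by rw [hsy]
  have ey3 : (standardPartition y).2.2 = y3 := by rw [hsy]
  have hex : x1 = x2 := by rw [← ex1, ← ex2]; exact sp_eq x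
  have hsx' : x1 + x2 + x3 = x := by rw [← ex1, ← ex2, ← ex3]; exact sp_sum x
  have hsy' : y1 + y2 + y3 = y := by rw [← ey1, ← ey2, ← ey3]; exact sp_sum y
  simp only [pairPartition] at hpart
  rw [if_neg (by simpa using h3.not_ge)] at hpart
  simp only [ex1, ex2, ex3, ey1, ey2, ey3, Prod.mk.injEq] at hpart
  obtain ⟨⟨-, hz1⟩, ⟨-, hz2⟩, -, hz3⟩ := hpart
  split_ifs at hz1 hz2 hz3 <;> omega
end
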